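/- Let X be a nonempty set, H = {H_x}_{x∈X} a bundle of Hilbert spaces, and K an H-operator-valued kernel (K(y,x) ∈ B(H_x, H_y)). Then K is positive semidefinite if and only if K admits a Hilbert space linearisation, i.e., there exist a Hilbert space K' and bounded operators V(x) : H_x → K' such that K(x,y) = V(x)* V(y) for all x, y ∈ X. -/

import Mathlib

/-- A Hilbert space linearisation (Kolmogorov decomposition) of an operator valued
kernel `K` over a bundle of Hilbert spaces `H`: a Hilbert space `space` and bounded
operators `V x : H x →L K'` such that `K x y = V(x)* V(y)`. -/
structure Linearisation {X : Type} (H : X → Type)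
    [∀ x, NormedAddCommGroup (H x)] [∀ x, InnerProductSpace ℝ (H x)]
    [∀ x, CompleteSpace (H x)]
    (K : ∀ y x : X, H x →L[ℝ] H y) where
  space : Type
  [grp : NormedAddCommGroup space]
  [ips : InnerProductSpace ℝ space]
  [cpl : CompleteSpace space]
  V : ∀ x, H x →L[ℝ] space
  factor : ∀ x y, K x y = ((V x).adjoint).comp (V y)

attribute [instance] Linearisation.grp Linearisation.ips Linearisation.cpl

/-!
If the Gram sums of `K` are nonnegative, then `⟪f, g⟫ := ∑ x, ∑ y, ⟪K y x (f x), g y⟫` is a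
semi-inner product on the finitely supported sections `Π₀ x, H x` (symmetric by hermiticity).
The linearisation space is the Hilbert completion of this pre-Hilbert space, and `V x` sends
`h : H x` to the section supported at `x`; it is bounded because `‖V x h‖² = ⟪K x x h, h⟫`.
Conversely, if `K x y = V(x)* V(y)` then each Gram sum equals `‖∑ i, V (xs i) (h i)‖²`.
-/

open scoped InnerProductSpace

namespace OperatorKernel

variable {X : Type} {H : X → Type} [∀ x, NormedAddCommGroup (H x)] [∀ x, InnerProductSpace ℝ (H x)]

def IsPosSemidef (K : ∀ y x : X, H x →L[ℝ] H y) : Prop :=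
  ∀ (n : ℕ) (xs : Fin n → X) (h : ∀ i, H (xs i)), 0 ≤ ∑ i, ∑ j, ⟪K (xs j) (xs i) (h i), h j⟫_ℝ

theorem IsPosSemidef.sum_nonneg {K : ∀ y x : X, H x →L[ℝ] H y} (hK : IsPosSemidef K)
    {ι : Type*} [Fintype ι] (xs : ι → X) (h : ∀ i, H (xs i)) :
    0 ≤ ∑ i, ∑ j, ⟪K (xs j) (xs i) (h i), h j⟫_ℝ := by
  let e := Fintype.equivFin ι
  simpa only [← e.symm.sum_comp] using hK _ (fun i => xs (e.symm i)) fun i => h (e.symm i)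

theorem isPosSemidef_adjoint_comp [∀ x, CompleteSpace (H x)] {E : Type*} [NormedAddCommGroup E]
    [InnerProductSpace ℝ E] [CompleteSpace E] (V : ∀ x, H x →L[ℝ] E) :
    IsPosSemidef fun y x => (V y).adjoint ∘L V x := by
  intro n xs h
  have gram : ∑ i, ∑ j, ⟪((V (xs j)).adjoint ∘L V (xs i)) (h i), h j⟫_ℝ
      = ⟪∑ i, V (xs i) (h i), ∑ j, V (xs j) (h j)⟫_ℝ := by
    simp only [ContinuousLinearMap.comp_apply, ContinuousLinearMap.adjoint_inner_left, sum_inner]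
    simp only [inner_sum]
  exact gram ▸ real_inner_self_nonneg

theorem _root_.Linearisation.isPosSemidef [∀ x, CompleteSpace (H x)]
    {K : ∀ y x : X, H x →L[ℝ] H y} (L : Linearisation H K) : IsPosSemidef K := by
  rw [show K = _ from funext₂ L.factor]
  exact isPosSemidef_adjoint_comp L.V

noncomputable def _root_.Linearisation.ofInner [∀ x, CompleteSpace (H x)]
    {K : ∀ y x : X, H x →L[ℝ] H y} {E : Type} [SeminormedAddCommGroup E] [InnerProductSpace ℝ E]
    (W : ∀ x, H x →ₗ[ℝ] E) (hW : ∀ x y (h : H x) (g : H y), ⟪W x h, W y g⟫_ℝ = ⟪K y x h, g⟫_ℝ) :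
    Linearisation H K :=
  have norm_W_le (x : X) (h : H x) : ‖W x h‖ ≤ √‖K x x‖ * ‖h‖ := by
    rw [← Real.sqrt_sq (norm_nonneg h), ← Real.sqrt_mul (norm_nonneg _), norm_eq_sqrt_real_inner,
      hW]
    gcongr
    calc ⟪K x x h, h⟫_ℝ ≤ ‖K x x h‖ * ‖h‖ := real_inner_le_norm _ _
      _ ≤ ‖K x x‖ * ‖h‖ * ‖h‖ := by gcongr; exact (K x x).le_opNorm h
      _ = ‖K x x‖ * ‖h‖ ^ 2 := by ring
  { space := UniformSpace.Completion E
    V := fun x => UniformSpace.Completion.toComplL ∘L (W x).mkContinuous _ (norm_W_le x)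
    factor := fun x y => by
      ext g
      refine ext_inner_right ℝ fun h => ?_
      simp [ContinuousLinearMap.adjoint_inner_left, UniformSpace.Completion.inner_coe, hW] }

section KernelForm

variable [DecidableEq X] (K : ∀ y x : X, H x →L[ℝ] H y)

noncomputable def kernelForm : (Π₀ x, H x) →ₗ[ℝ] (Π₀ x, H x) →ₗ[ℝ] ℝ :=
  DFinsupp.lsum ℝ fun x => (DFinsupp.lsum ℝ).toLinearMap ∘ₗ
    LinearMap.pi fun y => innerₗ (H y) ∘ₗ (K y x).toLinearMap

@[simp]
theorem kernelForm_single_single (x y : X) (h : H x) (g : H y) :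
    kernelForm K (DFinsupp.single x h) (DFinsupp.single y g) = ⟪K y x h, g⟫_ℝ := by
  simp [kernelForm]

theorem kernelForm_apply [∀ x (h : H x), Decidable (h ≠ 0)] (f g : Π₀ x, H x) :
    kernelForm K f g = ∑ x ∈ f.support, ∑ y ∈ g.support, ⟪K y x (f x), g y⟫_ℝ := by
  simp [kernelForm, DFinsupp.lsum_apply_apply, DFinsupp.sumAddHom_apply, DFinsupp.sum]

variable {K}

theorem kernelForm_comm [∀ x, CompleteSpace (H x)] (herm : ∀ x y, K y x = (K x y).adjoint)
    (f g : Π₀ x, H x) : kernelForm K f g = kernelForm K g f := by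
  suffices kernelForm K = (kernelForm K).flip from LinearMap.congr_fun₂ this f g
  refine DFinsupp.lhom_ext fun x h => DFinsupp.lhom_ext fun y g => ?_
  rw [LinearMap.flip_apply, kernelForm_single_single, kernelForm_single_single, herm,
    ContinuousLinearMap.adjoint_inner_left, real_inner_comm]

theorem IsPosSemidef.kernelForm_self_nonneg (hK : IsPosSemidef K) (f : Π₀ x, H x) :
    0 ≤ kernelForm K f f := by
  classical
  rw [kernelForm_apply, ← Finset.sum_coe_sort f.support]
  simp_rw [← Finset.sum_coe_sort f.support]
  exact hK.sum_nonneg (fun x : f.support => (x : X)) fun x => f x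

@[reducible]
noncomputable def kernelCore [∀ x, CompleteSpace (H x)] (hK : IsPosSemidef K)
    (herm : ∀ x y, K y x = (K x y).adjoint) : PreInnerProductSpace.Core ℝ (Π₀ x, H x) where
  inner f g := kernelForm K f g
  conj_inner_symm f g := kernelForm_comm herm g f
  re_inner_nonneg := hK.kernelForm_self_nonneg
  add_left f f' g := by simp
  smul_left f g r := by simp

noncomputable def IsPosSemidef.linearisation [∀ x, CompleteSpace (H x)] (hK : IsPosSemidef K)
    (herm : ∀ x y, K y x = (K x y).adjoint) : Linearisation H K :=
  letI := kernelCore hK herm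
  letI := InnerProductSpace.Core.toSeminormedAddCommGroup (𝕜 := ℝ) (F := Π₀ x, H x)
  letI := InnerProductSpace.ofCore (kernelCore hK herm)
  .ofInner DFinsupp.lsingle fun x y => kernelForm_single_single K x y

end KernelForm

end OperatorKernel

theorem posSemidef_iff_linearisation {X : Type} (H : X → Type)
    [∀ x, NormedAddCommGroup (H x)] [∀ x, InnerProductSpace ℝ (H x)]
    [∀ x, CompleteSpace (H x)]
    (K : ∀ y x : X, H x →L[ℝ] H y)
    (herm : ∀ x y, K y x = (K x y).adjoint) :
    (∀ (n : ℕ) (xs : Fin n → X) (h : ∀ i, H (xs i)),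
        0 ≤ ∑ i, ∑ j, (inner ℝ (K (xs j) (xs i) (h i)) (h j) : ℝ)) ↔
      Nonempty (Linearisation H K) := by
  classical
  exact ⟨fun hK => ⟨OperatorKernel.IsPosSemidef.linearisation hK herm⟩, fun ⟨L⟩ => L.isPosSemidef⟩
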